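/- Let A, B ∈ M_n(FT), matrices over the finitary tropical semiring. Then A J B if and only if A D B, i.e., Green's relations D and J coincide on M_n(FT). -/

import Mathlib

/-- Tropical (max-plus) matrix multiplication over `FT = (ℝ, max, +)`. -/
def tropMul {n : ℕ} [NeZero n] (X Y : Matrix (Fin n) (Fin n) ℝ) :
    Matrix (Fin n) (Fin n) ℝ :=
  fun i j => Finset.univ.sup' Finset.univ_nonempty fun k => X i k + Y k j

variable {n : ℕ} [NeZero n]

/-- `A ≤_J B` in `M_n(FT)`: `A ∈ M¹ B M¹`. -/
def Jle (A B : Matrix (Fin n) (Fin n) ℝ) : Prop :=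
  A = B ∨ (∃ P, A = tropMul P B) ∨ (∃ Q, A = tropMul B Q) ∨
    ∃ P Q, A = tropMul (tropMul P B) Q

/-- `A ≤_R B`: `A ∈ B M¹`. -/
def Rle (A B : Matrix (Fin n) (Fin n) ℝ) : Prop :=
  A = B ∨ ∃ Q, A = tropMul B Q

/-- `A ≤_L B`: `A ∈ M¹ B`. -/
def Lle (A B : Matrix (Fin n) (Fin n) ℝ) : Prop :=
  A = B ∨ ∃ P, A = tropMul P B

/-!
The only nontrivial input is stability: if `A = S A T` then `A` lies in `(A T) M`, and dually in
`M (S A)`; from this `D = J` follows as in any stable semigroup. Every `A` also has local identities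
`A = A E = E' A`, so `M¹` may be replaced by `M` throughout.

For stability, let `z m = A T^m μ`. Then `S z (m + 1) = z m`, and `v ↦ S v` is nonexpansive for the
Hilbert projective metric, so `d(z 0, z j) ≤ d(z i, z (i + j))`. All `z (m + 1)` lie in the column
space of `A T`, whose projectivisation is compact; choosing `z i` and `z (i + j)` close shows that
`z 0` is a limit of points of that compact set, so the column space of `A` is contained in that
of `A T`.
-/

open Matrix

theorem backward_orbit_le {α : Type*} {d : α → α → ℝ} {f : α → α}
    (hf : ∀ x y, d (f x) (f y) ≤ d x y) {y : ℕ → α} (hy : ∀ m, f (y (m + 1)) = y m) (i j : ℕ) :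
    d (y 0) (y j) ≤ d (y i) (y (i + j)) := by
  induction i with
  | zero => simp
  | succ i ih =>
    calc d (y 0) (y j) ≤ d (y i) (y (i + j)) := ih
      _ = d (f (y (i + 1))) (f (y (i + j + 1))) := by rw [hy, hy]
      _ ≤ d (y (i + 1)) (y (i + 1 + j)) := by rw [Nat.add_right_comm]; exact hf _ _

theorem IsCompact.mem_of_dist_le_mul_dist_shift {X : Type*} [MetricSpace X] {K : Set X}
    (hK : IsCompact K) {y : ℕ → X} (hyK : ∀ m, y (m + 1) ∈ K) {C : ℝ}
    (hy : ∀ i j, dist (y 0) (y j) ≤ C * dist (y i) (y (i + j))) : y 0 ∈ K := by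
  refine hK.isClosed.closure_subset (Metric.mem_closure_iff.2 fun ε hε => ?_)
  obtain ⟨a, -, φ, hφ, hlim⟩ := hK.tendsto_subseq hyK
  obtain ⟨N, hN⟩ := Metric.cauchySeq_iff'.1 hlim.cauchySeq (ε / (|C| + 1)) (by positivity)
  obtain ⟨j, hj⟩ := Nat.exists_eq_add_of_lt (hφ (Nat.lt_add_one N))
  have hclose : dist (y (φ N + 1)) (y (φ N + 1 + (j + 1))) < ε / (|C| + 1) := by
    rw [dist_comm, show φ N + 1 + (j + 1) = φ (N + 1) + 1 by omega]
    exact hN (N + 1) N.le_succ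
  refine ⟨y (j + 1), hyK j, ?_⟩
  calc dist (y 0) (y (j + 1)) ≤ C * dist (y (φ N + 1)) (y (φ N + 1 + (j + 1))) := hy _ _
    _ ≤ |C| * (ε / (|C| + 1)) := mul_le_mul (le_abs_self C) hclose.le dist_nonneg (abs_nonneg C)
    _ < ε := by
      rw [mul_div_assoc', div_lt_iff₀ (by positivity)]
      nlinarith [abs_nonneg C]

noncomputable def tropSum (f : Fin n → ℝ) : ℝ := Finset.univ.sup' Finset.univ_nonempty f

theorem le_tropSum (f : Fin n → ℝ) (k : Fin n) : f k ≤ tropSum f :=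
  Finset.le_sup' f (Finset.mem_univ k)

theorem tropSum_le {f : Fin n → ℝ} {a : ℝ} (h : ∀ k, f k ≤ a) : tropSum f ≤ a :=
  Finset.sup'_le _ _ fun k _ => h k

theorem exists_eq_tropSum (f : Fin n → ℝ) : ∃ k, f k = tropSum f := by
  obtain ⟨k, -, hk⟩ := Finset.exists_mem_eq_sup' Finset.univ_nonempty f
  exact ⟨k, hk.symm⟩

theorem tropSum_add_const (f : Fin n → ℝ) (c : ℝ) :
    tropSum (fun k => f k + c) = tropSum f + c := by
  obtain ⟨k, hk⟩ := exists_eq_tropSum f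
  refine le_antisymm (tropSum_le fun l => by linarith [le_tropSum f l]) ?_
  rw [← hk]
  exact le_tropSum (fun l => f l + c) k

noncomputable def tropMulVec (M : Matrix (Fin n) (Fin n) ℝ) (v : Fin n → ℝ) : Fin n → ℝ :=
  fun i => tropSum fun k => M i k + v k

theorem tropMul_apply (X Y : Matrix (Fin n) (Fin n) ℝ) (i j : Fin n) :
    tropMul X Y i j = tropSum fun k => X i k + Y k j := rfl

theorem tropMul_col (X Y : Matrix (Fin n) (Fin n) ℝ) (j : Fin n) :
    (fun i => tropMul X Y i j) = tropMulVec X fun k => Y k j := rfl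

theorem tropMulVec_tropMul (X Y : Matrix (Fin n) (Fin n) ℝ) (v : Fin n → ℝ) :
    tropMulVec (tropMul X Y) v = tropMulVec X (tropMulVec Y v) := by
  funext i
  refine le_antisymm (tropSum_le fun k => ?_) (tropSum_le fun l => ?_)
  · obtain ⟨l, hl⟩ := exists_eq_tropSum fun l => X i l + Y l k
    have h₁ : Y l k + v k ≤ tropMulVec Y v l := le_tropSum (fun m => Y l m + v m) k
    have h₂ : X i l + tropMulVec Y v l ≤ tropMulVec X (tropMulVec Y v) i :=
      le_tropSum (fun m => X i m + tropMulVec Y v m) l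
    show tropMul X Y i k + v k ≤ _
    rw [tropMul_apply, ← hl]
    linarith
  · obtain ⟨k, hk⟩ := exists_eq_tropSum fun k => Y l k + v k
    have h₁ : X i l + Y l k ≤ tropMul X Y i k := le_tropSum (fun m => X i m + Y m k) l
    have h₂ : tropMul X Y i k + v k ≤ tropMulVec (tropMul X Y) v i :=
      le_tropSum (fun m => tropMul X Y i m + v m) k
    show X i l + tropMulVec Y v l ≤ _
    rw [tropMulVec, ← hk]
    linarith

theorem tropMul_assoc (X Y Z : Matrix (Fin n) (Fin n) ℝ) :
    tropMul (tropMul X Y) Z = tropMul X (tropMul Y Z) := by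
  funext i j
  exact congrFun (tropMulVec_tropMul X Y fun k => Z k j) i

theorem tropMulVec_add_const (M : Matrix (Fin n) (Fin n) ℝ) (v : Fin n → ℝ) (c : ℝ) :
    tropMulVec M (fun k => v k + c) = fun i => tropMulVec M v i + c := by
  funext i
  simp only [tropMulVec, ← add_assoc]
  exact tropSum_add_const (fun k => M i k + v k) c

theorem tropMulVec_sub_le (M : Matrix (Fin n) (Fin n) ℝ) (u v : Fin n → ℝ) (i : Fin n) :
    tropMulVec M u i - tropMulVec M v i ≤ tropSum (u - v) := by
  have : tropMulVec M u i ≤ tropMulVec M v i + tropSum (u - v) := tropSum_le fun k => by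
    have h₁ : M i k + v k ≤ tropMulVec M v i := le_tropSum (fun m => M i m + v m) k
    have h₂ : u k - v k ≤ tropSum (u - v) := le_tropSum (u - v) k
    linarith
  linarith

theorem continuous_tropMulVec (M : Matrix (Fin n) (Fin n) ℝ) : Continuous (tropMulVec M) :=
  continuous_pi fun _ =>
    Continuous.finset_sup'_apply Finset.univ_nonempty fun k _ =>
      continuous_const.add (continuous_apply k)

theorem Matrix.exists_row_sub_le {ι κ : Type*} [Finite ι] [Finite κ] (M : Matrix ι κ ℝ) :
    ∃ R, ∀ i k l, M i k - M i l ≤ R := by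
  obtain ⟨R, hR⟩ := Finite.exists_le fun p : ι × κ × κ => M p.1 p.2.1 - M p.1 p.2.2
  exact ⟨R, fun i k l => hR (i, k, l)⟩

theorem tropMulVec_max_eq {M : Matrix (Fin n) (Fin n) ℝ} {R : ℝ} (hR : ∀ i k l, M i k - M i l ≤ R)
    (v : Fin n → ℝ) : tropMulVec M (fun k => max (v k) (tropSum v - R)) = tropMulVec M v := by
  funext i
  obtain ⟨k₀, hk₀⟩ := exists_eq_tropSum v
  refine le_antisymm (tropSum_le fun k => ?_) (tropSum_le fun k => ?_)
  · have h₁ : M i k + v k ≤ tropMulVec M v i := le_tropSum (fun m => M i m + v m) k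
    have h₂ : M i k₀ + v k₀ ≤ tropMulVec M v i := le_tropSum (fun m => M i m + v m) k₀
    show M i k + max _ _ ≤ _
    rw [add_max]
    exact max_le h₁ (by linarith [hR i k k₀])
  · have : M i k + max (v k) (tropSum v - R) ≤
        tropMulVec M (fun k => max (v k) (tropSum v - R)) i :=
      le_tropSum (fun m => M i m + max (v m) (tropSum v - R)) k
    show M i k + v k ≤ _
    linarith [le_max_left (v k) (tropSum v - R)]

theorem transpose_tropMul (X Y : Matrix (Fin n) (Fin n) ℝ) :
    (tropMul X Y)ᵀ = tropMul Yᵀ Xᵀ := by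
  ext i j
  simp only [transpose_apply, tropMul_apply, add_comm]

theorem exists_tropMul_eq_self (A : Matrix (Fin n) (Fin n) ℝ) : ∃ E, tropMul A E = A := by
  obtain ⟨R, hR⟩ := exists_row_sub_le A
  refine ⟨fun k j => if k = j then 0 else -R, funext fun i => funext fun j => ?_⟩
  refine le_antisymm (tropSum_le fun k => ?_) ?_
  · show A i k + (if k = j then 0 else -R) ≤ A i j
    split_ifs with h
    · rw [h, add_zero]
    · linarith [hR i k j]
  · have : A i j + (if j = j then 0 else -R) ≤
        tropMul A (fun k j => if k = j then 0 else -R) i j :=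
      le_tropSum (fun k => A i k + if k = j then 0 else -R) j
    simpa using this

theorem exists_tropMul_eq_self_left (A : Matrix (Fin n) (Fin n) ℝ) : ∃ E, tropMul E A = A := by
  obtain ⟨E, hE⟩ := exists_tropMul_eq_self Aᵀ
  exact ⟨Eᵀ, by simpa [transpose_tropMul] using congrArg transpose hE⟩

theorem jle_iff {A B : Matrix (Fin n) (Fin n) ℝ} :
    Jle A B ↔ ∃ P Q, A = tropMul (tropMul P B) Q := by
  obtain ⟨E, hE⟩ := exists_tropMul_eq_self_left B
  obtain ⟨F, hF⟩ := exists_tropMul_eq_self B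
  refine ⟨?_, fun h => Or.inr (Or.inr (Or.inr h))⟩
  rintro (rfl | ⟨P, rfl⟩ | ⟨Q, rfl⟩ | h)
  · exact ⟨E, F, by rw [hE, hF]⟩
  · exact ⟨P, F, by rw [tropMul_assoc, hF]⟩
  · exact ⟨E, Q, by rw [hE]⟩
  · exact h

theorem rle_iff {A B : Matrix (Fin n) (Fin n) ℝ} : Rle A B ↔ ∃ Q, A = tropMul B Q := by
  obtain ⟨F, hF⟩ := exists_tropMul_eq_self B
  refine ⟨?_, Or.inr⟩
  rintro (rfl | h)
  · exact ⟨F, hF.symm⟩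
  · exact h

theorem lle_iff {A B : Matrix (Fin n) (Fin n) ℝ} : Lle A B ↔ ∃ P, A = tropMul P B := by
  obtain ⟨E, hE⟩ := exists_tropMul_eq_self_left B
  refine ⟨?_, Or.inr⟩
  rintro (rfl | h)
  · exact ⟨E, hE.symm⟩
  · exact h

noncomputable def hilbertDist (x y : Fin n → ℝ) : ℝ := tropSum (x - y) + tropSum (y - x)

theorem hilbertDist_tropMulVec_le (M : Matrix (Fin n) (Fin n) ℝ) (x y : Fin n → ℝ) :
    hilbertDist (tropMulVec M x) (tropMulVec M y) ≤ hilbertDist x y :=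
  add_le_add (tropSum_le (tropMulVec_sub_le M x y)) (tropSum_le (tropMulVec_sub_le M y x))

theorem hilbertDist_le_two_mul_dist (x y : Fin n → ℝ) : hilbertDist x y ≤ 2 * dist x y := by
  have h (u v : Fin n → ℝ) : tropSum (u - v) ≤ dist u v := tropSum_le fun k =>
    (le_abs_self _).trans ((Real.dist_eq (u k) (v k)).symm.trans_le (dist_le_pi_dist u v k))
  unfold hilbertDist
  linarith [h x y, h y x, dist_comm x y]

/-- The representative of the projective class of `x` (modulo adding constants) whose `0`-th
coordinate vanishes; on these the Hilbert metric is comparable to the sup metric. -/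
def projNormalize (x : Fin n → ℝ) : Fin n → ℝ := fun i => x i - x 0

theorem projNormalize_add_const (x : Fin n → ℝ) (c : ℝ) :
    projNormalize (fun i => x i + c) = projNormalize x := by
  funext i
  simp only [projNormalize]
  ring

theorem eq_add_const_of_projNormalize_eq {x y : Fin n → ℝ} (h : projNormalize x = projNormalize y) :
    x = fun i => y i + (x 0 - y 0) := by
  funext i
  linarith [congrFun h i, show projNormalize x i = x i - x 0 from rfl,
    show projNormalize y i = y i - y 0 from rfl]

theorem hilbertDist_projNormalize (x y : Fin n → ℝ) :
    hilbertDist (projNormalize x) (projNormalize y) = hilbertDist x y := by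
  have h (u v : Fin n → ℝ) :
      tropSum (projNormalize u - projNormalize v) = tropSum (u - v) + (v 0 - u 0) := by
    rw [← tropSum_add_const]
    congr 1
    funext i
    simp only [projNormalize, Pi.sub_apply]
    ring
  simp only [hilbertDist, h]
  ring

theorem dist_projNormalize_le (x y : Fin n → ℝ) :
    dist (projNormalize x) (projNormalize y) ≤ hilbertDist x y := by
  have h₁ (i : Fin n) : x i - y i ≤ tropSum (x - y) := le_tropSum (x - y) i
  have h₂ (i : Fin n) : y i - x i ≤ tropSum (y - x) := le_tropSum (y - x) i
  refine (dist_pi_le_iff (by unfold hilbertDist; linarith [h₁ 0, h₂ 0])).2 fun i => ?_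
  rw [Real.dist_eq, abs_le]
  simp only [projNormalize, hilbertDist]
  constructor <;> linarith [h₁ i, h₂ i, h₁ 0, h₂ 0]

theorem isCompact_projNormalize_range (M : Matrix (Fin n) (Fin n) ℝ) :
    IsCompact (projNormalize '' Set.range (tropMulVec M)) := by
  obtain ⟨R, hR⟩ := exists_row_sub_le M
  have hR₀ : 0 ≤ R := by simpa using hR 0 0 0
  -- shift `μ` so that its maximum is `0`, then cut it off below at `-R`
  have hbox (μ : Fin n → ℝ) : projNormalize (tropMulVec M μ) ∈
      (projNormalize ∘ tropMulVec M) '' Set.Icc (fun _ => -R) 0 := by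
    refine ⟨fun k => max (μ k) (tropSum μ - R) + -tropSum μ, ⟨fun k => ?_, fun k => ?_⟩, ?_⟩
    · simp only [le_add_neg_iff_add_le]
      linarith [le_max_right (μ k) (tropSum μ - R)]
    · simp only [Pi.zero_apply]
      linarith [max_le (le_tropSum μ k) (by linarith : tropSum μ - R ≤ tropSum μ)]
    · simp only [Function.comp_apply, tropMulVec_add_const, projNormalize_add_const,
        tropMulVec_max_eq hR]
  have hcont : Continuous (projNormalize ∘ tropMulVec M) :=
    (continuous_pi fun i => (continuous_apply i).sub (continuous_apply 0)).comp
      (continuous_tropMulVec M)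
  convert isCompact_Icc.image hcont using 1
  refine Set.Subset.antisymm ?_ ?_
  · rintro _ ⟨_, ⟨μ, rfl⟩, rfl⟩
    exact hbox μ
  · rintro _ ⟨ν, -, rfl⟩
    exact ⟨_, ⟨ν, rfl⟩, rfl⟩

theorem range_tropMulVec_subset_of_eq {A S T : Matrix (Fin n) (Fin n) ℝ}
    (h : A = tropMul (tropMul S A) T) :
    Set.range (tropMulVec A) ⊆ Set.range (tropMulVec (tropMul A T)) := by
  rintro _ ⟨μ, rfl⟩
  set z : ℕ → Fin n → ℝ := fun m => tropMulVec A ((tropMulVec T)^[m] μ)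
  have hzT (m : ℕ) : z (m + 1) = tropMulVec (tropMul A T) ((tropMulVec T)^[m] μ) := by
    show tropMulVec A ((tropMulVec T)^[m + 1] μ) = _
    rw [Function.iterate_succ_apply', tropMulVec_tropMul]
  have horbit (m : ℕ) : tropMulVec S (z (m + 1)) = z m := by
    rw [hzT, ← tropMulVec_tropMul, ← tropMul_assoc, ← h]
  have hmem : projNormalize (z 0) ∈ projNormalize '' Set.range (tropMulVec (tropMul A T)) := by
    refine (isCompact_projNormalize_range _).mem_of_dist_le_mul_dist_shift
      (y := fun m => projNormalize (z m)) (C := 2) (fun m => ⟨_, ⟨_, (hzT m).symm⟩, rfl⟩)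
      fun i j => ?_
    calc dist (projNormalize (z 0)) (projNormalize (z j)) ≤ hilbertDist (z 0) (z j) :=
          dist_projNormalize_le _ _
      _ ≤ hilbertDist (z i) (z (i + j)) :=
          backward_orbit_le (hilbertDist_tropMulVec_le S) horbit i j
      _ = hilbertDist (projNormalize (z i)) (projNormalize (z (i + j))) :=
          (hilbertDist_projNormalize _ _).symm
      _ ≤ 2 * dist (projNormalize (z i)) (projNormalize (z (i + j))) :=
          hilbertDist_le_two_mul_dist _ _
  obtain ⟨_, ⟨ν, rfl⟩, hν⟩ := hmem
  exact ⟨_, (tropMulVec_add_const _ _ _).trans (eq_add_const_of_projNormalize_eq hν.symm).symm⟩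

theorem exists_right_factor_of_eq_tropMul_tropMul {A S T : Matrix (Fin n) (Fin n) ℝ}
    (h : A = tropMul (tropMul S A) T) : ∃ X, A = tropMul (tropMul A T) X := by
  obtain ⟨E, hE⟩ := exists_tropMul_eq_self A
  have hcol (j : Fin n) : (fun i => A i j) ∈ Set.range (tropMulVec (tropMul A T)) :=
    range_tropMulVec_subset_of_eq h ⟨fun k => E k j, by rw [← tropMul_col, hE]⟩
  choose ν hν using hcol
  exact ⟨fun k j => ν j k, funext fun i => funext fun j => (congrFun (hν j) i).symm⟩

theorem exists_left_factor_of_eq_tropMul_tropMul {A S T : Matrix (Fin n) (Fin n) ℝ}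
    (h : A = tropMul (tropMul S A) T) : ∃ Y, A = tropMul Y (tropMul S A) := by
  have hT : Aᵀ = tropMul (tropMul Tᵀ Aᵀ) Sᵀ := by
    conv_lhs => rw [h]
    rw [transpose_tropMul, transpose_tropMul, tropMul_assoc]
  obtain ⟨X, hX⟩ := exists_right_factor_of_eq_tropMul_tropMul hT
  exact ⟨Xᵀ, by simpa [transpose_tropMul] using congrArg transpose hX⟩

/-- `D = J` for finitary tropical matrices: `A J B` iff `A D B` in `M_n(FT)`. -/
theorem stmt12 (A B : Matrix (Fin n) (Fin n) ℝ) :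
    (Jle A B ∧ Jle B A) ↔
      ∃ C : Matrix (Fin n) (Fin n) ℝ,
        (Rle A C ∧ Rle C A) ∧ (Lle C B ∧ Lle B C) := by
  simp only [jle_iff, rle_iff, lle_iff]
  constructor
  · rintro ⟨⟨P, Q, rfl⟩, U, V, hB⟩
    have hB' : B = tropMul (tropMul (tropMul U P) B) (tropMul Q V) := by
      conv_lhs => rw [hB]
      simp only [tropMul_assoc]
    have hPB : tropMul P B = tropMul (tropMul (tropMul P U) (tropMul P B)) (tropMul Q V) := by
      conv_lhs => rw [hB]
      simp only [tropMul_assoc]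
    obtain ⟨X, hX⟩ := exists_right_factor_of_eq_tropMul_tropMul hPB
    obtain ⟨Y, hY⟩ := exists_left_factor_of_eq_tropMul_tropMul hB'
    refine ⟨tropMul P B, ⟨⟨Q, rfl⟩, tropMul V X, ?_⟩, ⟨P, rfl⟩, tropMul Y U, ?_⟩
    · conv_lhs => rw [hX]
      simp only [tropMul_assoc]
    · conv_lhs => rw [hY]
      simp only [tropMul_assoc]
  · rintro ⟨C, ⟨⟨Q, rfl⟩, X, hC⟩, ⟨P, rfl⟩, Y, hB⟩
    refine ⟨⟨P, Q, rfl⟩, Y, X, ?_⟩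
    conv_lhs => rw [hB, hC]
    simp only [tropMul_assoc]
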